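/- arXiv:2403.07068 — 5 statements merged into one kernel-verified Lean document; each statement's English description precedes it below -/
import Mathlib

section
/- Let p ∈ (0,1], ε ∈ (0,1], δ ∈ (0,1), m ≥ 1, and suppose d ≥ 8·ln(2m/δ)/(3pε²). Then 2·(1 − p + p·exp(−ε²/2))^d ≤ δ/m. -/
theorem stmt_7 (p ε δ m d : ℝ) (hp : p ∈ Set.Ioc (0:ℝ) 1) (hε : ε ∈ Set.Ioc (0:ℝ) 1)
    (hδ : δ ∈ Set.Ioo (0:ℝ) 1) (hm : 1 ≤ m)
    (hd : 8 * Real.log (2 * m / δ) / (3 * p * ε ^ 2) ≤ d) :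
    2 * (1 - p + p * Real.exp (-ε ^ 2 / 2)) ^ d ≤ δ / m := by
  obtain ⟨hp0, hp1⟩ := hp
  obtain ⟨hε0, hε1⟩ := hε
  obtain ⟨hδ0, hδ1⟩ := hδ
  set x := ε ^ 2 / 2 with hx
  have hx0 : 0 < x := by positivity
  have hxh : x ≤ 1 / 2 := by nlinarith
  -- exp(-x) ≤ 1 - 3x/4
  have hq : 1 + x + x ^ 2 / 2 ≤ Real.exp x := Real.quadratic_le_exp_of_nonneg hx0.le
  have hexp : Real.exp (-x) ≤ 1 - 3 * x / 4 := by
    rw [Real.exp_neg]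
    rw [inv_le_iff_one_le_mul₀ (Real.exp_pos x)]
    nlinarith [Real.exp_pos x]
  set q := 1 - p + p * Real.exp (-x) with hqdef
  have hq0 : 0 < q := by
    have := Real.exp_pos (-x)
    nlinarith
  have hqle : q ≤ 1 - 3 * p * x / 4 := by nlinarith
  have hlog : Real.log q ≤ -(3 * p * ε ^ 2) / 8 := by
    have := Real.log_le_sub_one_of_pos hq0
    have : Real.log q ≤ -3 * p * x / 4 := by linarith
    rw [hx] at this
    linarith
  have hC : 0 < 3 * p * ε ^ 2 := by positivity
  set L := Real.log (2 * m / δ) with hL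
  have hL0 : 0 ≤ L := Real.log_nonneg (by rw [le_div_iff₀ hδ0]; nlinarith)
  have hdlog : d * Real.log q ≤ -L := by
    have h1 : d * Real.log q ≤ (8 * L / (3 * p * ε ^ 2)) * Real.log q := by
      exact mul_le_mul_of_nonpos_right hd (by linarith)
    have h2 : (8 * L / (3 * p * ε ^ 2)) * Real.log q ≤
        (8 * L / (3 * p * ε ^ 2)) * (-(3 * p * ε ^ 2) / 8) := by
      apply mul_le_mul_of_nonneg_left hlog
      positivity
    have h3 : (8 * L / (3 * p * ε ^ 2)) * (-(3 * p * ε ^ 2) / 8) = -L := by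
      field_simp
    linarith
  have hrpow : q ^ d = Real.exp (d * Real.log q) := by
    rw [Real.rpow_def_of_pos hq0, mul_comm]
  have hfin : q ^ d ≤ δ / (2 * m) := by
    rw [hrpow]
    calc Real.exp (d * Real.log q) ≤ Real.exp (-L) := Real.exp_le_exp.mpr hdlog
      _ = δ / (2 * m) := by
          rw [hL, ← Real.log_inv, Real.exp_log (by positivity)]
          rw [inv_div]
  have : -ε ^ 2 / 2 = -x := by rw [hx]; ring
  rw [this]
  have hm0 : m ≠ 0 := by linarith
  have h2 : 2 * (δ / (2 * m)) = δ / m := by field_simp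
  linarith
end

section
/- Setting p = 3^{−k}: for ε ∈ (0,1], δ ∈ (0,1), m ≥ 1, k ≥ 1, and any integer d ≥ 8·3^{k−1}·ln(2m/δ)/ε², one has m · 2·(1 − 3^{−k} + 3^{−k}·exp(−ε²/2))^d ≤ δ. -/
set_option maxHeartbeats 1000000


theorem stmt_8 (ε δ m : ℝ) (hε : ε ∈ Set.Ioc (0:ℝ) 1) (hδ : δ ∈ Set.Ioo (0:ℝ) 1)
    (hm : 1 ≤ m) (k : ℕ) (hk : 1 ≤ k) (d : ℕ)
    (hd : 8 * (3:ℝ) ^ (k - 1) * Real.log (2 * m / δ) / ε ^ 2 ≤ (d : ℝ)) :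
    m * (2 * (1 - ((3:ℝ) ^ k)⁻¹ + ((3:ℝ) ^ k)⁻¹ * Real.exp (-ε ^ 2 / 2)) ^ d) ≤ δ := by
  obtain ⟨hε0, hε1⟩ := hε
  obtain ⟨hδ0, hδ1⟩ := hδ
  set x : ℝ := ε ^ 2 / 2 with hxdef
  have hx0 : 0 < x := by positivity
  have hx1 : x ≤ 1 / 2 := by nlinarith
  -- c := 1 - exp(-x) ≥ 3x/4
  set c : ℝ := 1 - Real.exp (-x) with hcdef
  have hquad : 1 + x + x ^ 2 / 2 ≤ Real.exp x := Real.quadratic_le_exp_of_nonneg hx0.le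
  have hDpos : (0:ℝ) < 1 + x + x ^ 2 / 2 := by positivity
  have hEneg : Real.exp (-x) ≤ (1 + x + x ^ 2 / 2)⁻¹ := by
    rw [Real.exp_neg]
    exact inv_anti₀ hDpos hquad
  have hc : 3 * x / 4 ≤ c := by
    have h1 : (1 + x + x ^ 2 / 2)⁻¹ ≤ 1 - 3 * x / 4 := by
      rw [inv_le_iff_one_le_mul₀ hDpos]
      nlinarith
    have h2 := hEneg.trans h1
    simp only [hcdef]; linarith
  have hc1 : c ≤ 1 := by
    have := Real.exp_pos (-x)
    simp only [hcdef]; linarith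
  have hc0 : 0 < c := by linarith
  -- P := 3^{-k}
  set T : ℝ := (3:ℝ) ^ (k - 1) with hTdef
  have hT0 : (0:ℝ) < T := by positivity
  have h3k : (3:ℝ) ^ k = 3 * T := by
    rw [hTdef, ← pow_succ']
    congr 1
    omega
  set P : ℝ := ((3:ℝ) ^ k)⁻¹ with hPdef
  have hP0 : 0 < P := by positivity
  have hP1 : P ≤ 1 := by
    rw [hPdef]
    apply inv_le_one_of_one_le₀
    exact one_le_pow₀ (by norm_num)
  -- base bound
  have hbase_eq : 1 - P + P * Real.exp (-ε ^ 2 / 2) = 1 - P * c := by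
    have h : -ε ^ 2 / 2 = -x := by rw [hxdef]; ring
    rw [h, hcdef]; ring
  have hPc0 : 0 < P * c := by positivity
  have hPc1 : P * c ≤ 1 := by nlinarith
  have hbase0 : 0 ≤ 1 - P * c := by linarith
  have hbase_le : 1 - P * c ≤ Real.exp (-(P * c)) := by
    have := Real.add_one_le_exp (-(P * c))
    linarith
  have hpow : (1 - P * c) ^ d ≤ Real.exp (-((d : ℝ) * (P * c))) := by
    calc (1 - P * c) ^ d ≤ Real.exp (-(P * c)) ^ d :=
          pow_le_pow_left₀ hbase0 hbase_le d
      _ = Real.exp (-((d : ℝ) * (P * c))) := by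
          rw [← Real.exp_nat_mul]; ring_nf
  -- log bound
  set L : ℝ := Real.log (2 * m / δ) with hLdef
  have hratio : 1 ≤ 2 * m / δ := by
    rw [le_div_iff₀ hδ0]; nlinarith
  have hL0 : 0 ≤ L := Real.log_nonneg hratio
  have hq : x / (4 * T) ≤ P * c := by
    have h1 : P * (3 * x / 4) ≤ P * c := by
      apply mul_le_mul_of_nonneg_left hc hP0.le
    have h2 : P * (3 * x / 4) = x / (4 * T) := by
      rw [hPdef, h3k]
      field_simp
    linarith
  have hεne : ε ^ 2 ≠ 0 := by positivity
  have hdPc : L ≤ (d : ℝ) * (P * c) := by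
    have hA0 : 0 ≤ 8 * T * L / ε ^ 2 := by positivity
    have hmul : (8 * T * L / ε ^ 2) * (x / (4 * T)) ≤ (d : ℝ) * (P * c) :=
      mul_le_mul hd hq (by positivity) ((Nat.cast_nonneg d))
    have heq : (8 * T * L / ε ^ 2) * (x / (4 * T)) = L := by
      rw [hxdef]
      field_simp
      ring
    exact le_of_eq_of_le heq.symm hmul
  have hexp_le : Real.exp (-((d : ℝ) * (P * c))) ≤ δ / (2 * m) := by
    have h1 : Real.exp (-((d : ℝ) * (P * c))) ≤ Real.exp (-L) :=
      Real.exp_le_exp.mpr (by linarith)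
    have h2 : Real.exp (-L) = δ / (2 * m) := by
      rw [hLdef, Real.exp_neg, Real.exp_log (by positivity)]
      rw [inv_div]
    linarith
  -- conclude
  rw [hbase_eq]
  have hm0 : 0 < m := by linarith
  calc m * (2 * (1 - P * c) ^ d)
      ≤ m * (2 * Real.exp (-((d : ℝ) * (P * c)))) := by
        apply mul_le_mul_of_nonneg_left _ hm0.le
        linarith
    _ ≤ m * (2 * (δ / (2 * m))) := by
        apply mul_le_mul_of_nonneg_left _ hm0.le
        linarith
    _ = δ := by field_simp
end

section
/- Let a ≥ 1 be an integer. Then ∑_{i=1}^{a} C(a,i)·(1/√(2(a−i)+1) + 2/√i) ≤ 2^a · (4 + √2)·√2/√a · (1 + o(1)) as a → ∞; more precisely, the normalized quantity (1/(3(2^a − 1)))·√((2a+1)/3)·∑_{i=1}^{a} C(a,i)[1/√(2(a−i)+1) + 2/√i] converges to (4+√2)/(3√3) as a → ∞. -/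
open Filter Finset Real Topology

/-!
Write `f a i = 1 / √(2(a - i) + 1) + 2 / √i = 1 / √(2(a - i) + 1) + 2√2 / √(2i)`. The weights
`C(a, i) / 2 ^ a` concentrate on the window `|2i - a| < δ a`: the second moment of `2i - a` is
`a`, so by Chebyshev the mass outside is at most `1 / (δ² a)`. Inside the window both
`2(a - i) + 1` and `2i` lie between `(1 - δ) a` and `(1 + δ) a + 1`, so `√a f a i` is within a
factor `1 + O(δ)` of `1 + 2√2`; outside, `f a i ≤ 3` contributes at most `3 / (δ² √a)` after
scaling by `√a`. With `δ = a^(-1/8)` this gives `√a 2^(-a) ∑ C(a, i) f a i → 1 + 2√2`, and the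
prefactor `√((2a + 1) / 3) / (3 (2 ^ a - 1))` behaves like `√(2/3) / 3 · √a 2^(-a)`.
-/

theorem sum_range_choose_mul_two_mul_sub_sq (n : ℕ) :
    ∑ i ∈ range (n + 1), (n.choose i : ℝ) * (2 * i - n) ^ 2 = (n : ℝ) * 2 ^ n := by
  induction n with
  | zero => simp
  | succ n ih =>
    have hpascal := sum_choose_succ_mul (fun i _ => (2 * (i : ℝ) - (n + 1 : ℕ)) ^ 2) n
    have hpair : ∀ i ∈ range (n + 1),
        (n.choose i : ℝ) * (2 * (i : ℝ) - (n + 1 : ℕ)) ^ 2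
          + (n.choose i : ℝ) * (2 * ((i + 1 : ℕ) : ℝ) - (n + 1 : ℕ)) ^ 2
        = 2 * ((n.choose i : ℝ) * (2 * (i : ℝ) - n) ^ 2) + 2 * (n.choose i : ℝ) := by
      intro i _
      push_cast
      ring
    rw [hpascal, ← sum_add_distrib, sum_congr rfl hpair, sum_add_distrib, ← mul_sum, ← mul_sum,
      ih, ← Nat.cast_sum, Nat.sum_range_choose]
    push_cast
    ring

theorem cast_sum_range_choose (n : ℕ) : ∑ i ∈ range (n + 1), (n.choose i : ℝ) = 2 ^ n := by
  exact_mod_cast Nat.sum_range_choose n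

theorem sum_choose_far_le (n : ℕ) {t : ℝ} (ht : 0 < t) :
    ∑ i ∈ (range (n + 1)).filter (fun i : ℕ => t ≤ |2 * (i : ℝ) - n|), (n.choose i : ℝ)
      ≤ (n : ℝ) * 2 ^ n / t ^ 2 := by
  rw [le_div_iff₀ (by positivity), sum_mul, ← sum_range_choose_mul_two_mul_sub_sq]
  calc _ ≤ ∑ i ∈ (range (n + 1)).filter (fun i : ℕ => t ≤ |2 * (i : ℝ) - n|),
          (n.choose i : ℝ) * (2 * i - n) ^ 2 := by
        refine sum_le_sum fun i hi => ?_
        rw [← sq_abs (2 * (i : ℝ) - n)]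
        gcongr
        exact (mem_filter.1 hi).2
    _ ≤ _ := sum_le_sum_of_subset_of_nonneg (filter_subset _ _) fun _ _ _ => by positivity

theorem sub_le_sum_choose_near (n : ℕ) {t : ℝ} (ht : 0 < t) :
    (2 : ℝ) ^ n - n * 2 ^ n / t ^ 2
      ≤ ∑ i ∈ (range (n + 1)).filter (fun i : ℕ => |2 * (i : ℝ) - n| < t), (n.choose i : ℝ) := by
  have hsplit := sum_filter_add_sum_filter_not (range (n + 1))
    (fun i : ℕ => |2 * (i : ℝ) - n| < t) (fun i => (n.choose i : ℝ))
  simp only [not_lt] at hsplit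
  linarith [sum_choose_far_le n ht, cast_sum_range_choose n]

theorem div_sqrt_add_div_sqrt_le {c d m u v : ℝ} (hc : 0 ≤ c) (hd : 0 ≤ d) (hm : 0 < m)
    (hu : m ≤ u) (hv : m ≤ v) : c / √u + d / √v ≤ (c + d) / √m := by
  rw [add_div]
  gcongr

theorem div_sqrt_le_div_sqrt_add {c d M u v : ℝ} (hc : 0 ≤ c) (hd : 0 ≤ d) (hu : 0 < u)
    (hv : 0 < v) (huM : u ≤ M) (hvM : v ≤ M) : (c + d) / √M ≤ c / √u + d / √v := by
  rw [add_div]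
  gcongr

noncomputable def qotWeight (a i : ℕ) : ℝ := 1 / √(2 * ((a : ℝ) - i) + 1) + 2 / √i

theorem qotWeight_eq (a i : ℕ) :
    qotWeight a i = 1 / √(2 * ((a : ℝ) - i) + 1) + 2 * √2 / √(2 * i) := by
  rw [qotWeight, sqrt_mul zero_le_two, mul_comm 2 √2,
    mul_div_mul_left _ _ (by positivity : √(2 : ℝ) ≠ 0)]

theorem qotWeight_le_three {a i : ℕ} (hi : 1 ≤ i) (hia : i ≤ a) : qotWeight a i ≤ 3 := by
  have hi' : (1 : ℝ) ≤ i := by exact_mod_cast hi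
  have hia' : (i : ℝ) ≤ a := by exact_mod_cast hia
  have := div_sqrt_add_div_sqrt_le zero_le_one zero_le_two one_pos
    (by linarith : (1 : ℝ) ≤ 2 * (a - i) + 1) hi'
  rw [qotWeight]
  norm_num at this ⊢
  linarith

theorem qotWeight_le_of_near {a i : ℕ} {t : ℝ} (hta : t < a) (hi : |2 * (i : ℝ) - a| < t) :
    qotWeight a i ≤ (1 + 2 * √2) / √(a - t) := by
  rw [abs_lt] at hi
  rw [qotWeight_eq]
  exact div_sqrt_add_div_sqrt_le zero_le_one (by positivity) (by linarith) (by linarith)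
    (by linarith)

theorem le_qotWeight_of_near {a i : ℕ} {t : ℝ} (hta : t ≤ a) (hi : |2 * (i : ℝ) - a| < t) :
    (1 + 2 * √2) / √(a + t + 1) ≤ qotWeight a i := by
  rw [abs_lt] at hi
  rw [qotWeight_eq]
  exact div_sqrt_le_div_sqrt_add zero_le_one (by positivity) (by linarith) (by linarith)
    (by linarith) (by linarith)

theorem qotWeight_nonneg (a i : ℕ) : 0 ≤ qotWeight a i := by
  unfold qotWeight
  positivity

noncomputable def qotAverage (a : ℕ) : ℝ :=
  (∑ i ∈ Icc 1 a, (a.choose i : ℝ) * qotWeight a i) / 2 ^ a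

theorem qotAverage_le {a : ℕ} {t : ℝ} (ht : 0 < t) (hta : t < a) :
    qotAverage a ≤ (1 + 2 * √2) / √(a - t) + 3 * (a / t ^ 2) := by
  set near : ℕ → Prop := fun i => |2 * (i : ℝ) - a| < t
  have hIcc : Icc 1 a ⊆ range (a + 1) := fun i hi => by
    simp only [mem_Icc, mem_range] at hi ⊢
    omega
  have hnear : ∑ i ∈ (Icc 1 a).filter near, (a.choose i : ℝ) * qotWeight a i
      ≤ (1 + 2 * √2) / √(a - t) * 2 ^ a :=
    calc ∑ i ∈ (Icc 1 a).filter near, (a.choose i : ℝ) * qotWeight a i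
        ≤ ∑ i ∈ (Icc 1 a).filter near, (a.choose i : ℝ) * ((1 + 2 * √2) / √(a - t)) :=
          sum_le_sum fun i hi => by
            gcongr
            exact qotWeight_le_of_near hta (mem_filter.1 hi).2
      _ ≤ ∑ i ∈ range (a + 1), (a.choose i : ℝ) * ((1 + 2 * √2) / √(a - t)) :=
          sum_le_sum_of_subset_of_nonneg ((filter_subset _ _).trans hIcc)
            fun _ _ _ => by positivity
      _ = (1 + 2 * √2) / √(a - t) * 2 ^ a := by
          rw [← sum_mul, mul_comm, cast_sum_range_choose]
  have hfar : ∑ i ∈ (Icc 1 a).filter (fun i => ¬ near i), (a.choose i : ℝ) * qotWeight a i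
      ≤ 3 * (a * 2 ^ a / t ^ 2) :=
    calc ∑ i ∈ (Icc 1 a).filter (fun i => ¬ near i), (a.choose i : ℝ) * qotWeight a i
        ≤ ∑ i ∈ (Icc 1 a).filter (fun i => ¬ near i), 3 * (a.choose i : ℝ) :=
          sum_le_sum fun i hi => by
            obtain ⟨hi1, hia⟩ := mem_Icc.1 (mem_filter.1 hi).1
            rw [mul_comm]
            gcongr
            exact qotWeight_le_three hi1 hia
      _ ≤ ∑ i ∈ (range (a + 1)).filter (fun i : ℕ => t ≤ |2 * (i : ℝ) - a|),
            3 * (a.choose i : ℝ) :=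
          sum_le_sum_of_subset_of_nonneg
            (fun i hi => by
              simp only [near, mem_filter, not_lt] at hi ⊢
              exact ⟨hIcc hi.1, hi.2⟩)
            fun _ _ _ => by positivity
      _ ≤ 3 * (a * 2 ^ a / t ^ 2) := by
          rw [← mul_sum]
          gcongr
          exact sum_choose_far_le a ht
  rw [qotAverage, ← sum_filter_add_sum_filter_not (Icc 1 a) near, div_le_iff₀ (by positivity)]
  exact (add_le_add hnear hfar).trans_eq (by ring)

theorem le_qotAverage {a : ℕ} {t : ℝ} (ht : 0 < t) (hta : t ≤ a) :
    (1 + 2 * √2) / √(a + t + 1) * (1 - a / t ^ 2) ≤ qotAverage a := by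
  set near : ℕ → Prop := fun i => |2 * (i : ℝ) - a| < t
  have hnear_sub : (range (a + 1)).filter near ⊆ Icc 1 a := fun i hi => by
    obtain ⟨hia, hi⟩ := mem_filter.1 hi
    rw [mem_range] at hia
    refine mem_Icc.2 ⟨Nat.one_le_iff_ne_zero.2 fun hi0 => ?_, by omega⟩
    simp only [near, hi0, CharP.cast_eq_zero, mul_zero, zero_sub, abs_neg, Nat.abs_cast] at hi
    linarith
  rw [qotAverage, le_div_iff₀ (by positivity)]
  calc (1 + 2 * √2) / √(a + t + 1) * (1 - a / t ^ 2) * 2 ^ a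
      = (1 + 2 * √2) / √(a + t + 1) * (2 ^ a - a * 2 ^ a / t ^ 2) := by ring
    _ ≤ (1 + 2 * √2) / √(a + t + 1) * ∑ i ∈ (range (a + 1)).filter near, (a.choose i : ℝ) := by
        gcongr
        exact sub_le_sum_choose_near a ht
    _ ≤ ∑ i ∈ (range (a + 1)).filter near, (a.choose i : ℝ) * qotWeight a i := by
        rw [mul_sum]
        refine sum_le_sum fun i hi => ?_
        rw [mul_comm]
        gcongr
        exact le_qotWeight_of_near hta (mem_filter.1 hi).2
    _ ≤ ∑ i ∈ Icc 1 a, (a.choose i : ℝ) * qotWeight a i :=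
        sum_le_sum_of_subset_of_nonneg hnear_sub fun i _ _ => by
          have := qotWeight_nonneg a i
          positivity

theorem tendsto_sqrt_mul_qotAverage_of_window {δ : ℕ → ℝ} (hδpos : ∀ᶠ a in atTop, 0 < δ a)
    (hδ : Tendsto δ atTop (𝓝 0)) (hδa : Tendsto (fun a => δ a ^ 2 * √a) atTop atTop) :
    Tendsto (fun a : ℕ => √a * qotAverage a) atTop (𝓝 (1 + 2 * √2)) := by
  have hδa' : Tendsto (fun a : ℕ => δ a ^ 2 * a) atTop atTop := by
    refine tendsto_atTop_mono' _ ?_ hδa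
    filter_upwards [eventually_ge_atTop 1] with a ha
    have : √(a : ℝ) ≤ a := (sqrt_le_left (Nat.cast_nonneg a)).2 (by
      have : (1 : ℝ) ≤ a := by exact_mod_cast ha
      nlinarith)
    gcongr
  have hupper : Tendsto (fun a : ℕ => (1 + 2 * √2) / √(1 - δ a) + 3 * (δ a ^ 2 * √a)⁻¹)
      atTop (𝓝 (1 + 2 * √2)) := by
    have hroot : Tendsto (fun a => √(1 - δ a)) atTop (𝓝 (√(1 - 0))) :=
      (tendsto_const_nhds.sub hδ).sqrt
    simpa using (tendsto_const_nhds.div hroot (by simp)).add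
      (hδa.inv_tendsto_atTop.const_mul 3)
  have hlower : Tendsto
      (fun a : ℕ => (1 + 2 * √2) / √(1 + δ a + (a : ℝ)⁻¹) * (1 - (δ a ^ 2 * a)⁻¹))
      atTop (𝓝 (1 + 2 * √2)) := by
    have hroot : Tendsto (fun a : ℕ => √(1 + δ a + (a : ℝ)⁻¹)) atTop (𝓝 (√(1 + 0 + 0))) :=
      ((tendsto_const_nhds.add hδ).add tendsto_inv_atTop_nhds_zero_nat).sqrt
    simpa using ((tendsto_const_nhds (x := 1 + 2 * √2)).div hroot (by simp)).mul
      ((tendsto_const_nhds (x := (1 : ℝ))).sub hδa'.inv_tendsto_atTop)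
  have hwindow : ∀ᶠ a : ℕ in atTop, 0 < (a : ℝ) ∧ 0 < δ a ∧ δ a < 1 := by
    filter_upwards [eventually_ge_atTop 1, hδpos, hδ.eventually (gt_mem_nhds one_pos)]
      with a ha hδ0 hδ1
    exact ⟨by exact_mod_cast ha, hδ0, hδ1⟩
  refine tendsto_of_tendsto_of_tendsto_of_le_of_le' hlower hupper ?_ ?_
  · filter_upwards [hwindow] with a ⟨ha, hδ0, hδ1⟩
    calc _ = √a * ((1 + 2 * √2) / √(a + δ a * a + 1) * (1 - a / (δ a * a) ^ 2)) := by
          rw [show (a : ℝ) + δ a * a + 1 = (1 + δ a + (a : ℝ)⁻¹) * a by field_simp,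
            sqrt_mul (by positivity)]
          field_simp
      _ ≤ √a * qotAverage a := by
          gcongr
          exact le_qotAverage (by positivity) (by nlinarith)
  · filter_upwards [hwindow] with a ⟨ha, hδ0, hδ1⟩
    calc √a * qotAverage a
        ≤ √a * ((1 + 2 * √2) / √(a - δ a * a) + 3 * (a / (δ a * a) ^ 2)) := by
          gcongr
          exact qotAverage_le (by positivity) (by nlinarith)
      _ = _ := by
          have hroot : √(1 - δ a) ≠ 0 := (sqrt_pos.2 (by linarith)).ne'
          rw [show (a : ℝ) - δ a * a = (1 - δ a) * a by ring, sqrt_mul (by linarith)]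
          field_simp
          linear_combination (3 * √(1 - δ a)) * mul_self_sqrt ha.le

theorem tendsto_sqrt_mul_qotAverage :
    Tendsto (fun a : ℕ => √a * qotAverage a) atTop (𝓝 (1 + 2 * √2)) := by
  refine tendsto_sqrt_mul_qotAverage_of_window (δ := fun a => (a : ℝ) ^ (-(1 / 8 : ℝ)))
    ?_ ((tendsto_rpow_neg_atTop (by norm_num)).comp tendsto_natCast_atTop_atTop) ?_
  · filter_upwards [eventually_ge_atTop 1] with a ha
    exact rpow_pos_of_pos (by exact_mod_cast ha) _
  · refine ((tendsto_rpow_atTop (by norm_num : (0 : ℝ) < 1 / 4)).comp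
      tendsto_natCast_atTop_atTop).congr' ?_
    filter_upwards [eventually_ge_atTop 1] with a ha
    have ha' : (0 : ℝ) < a := by exact_mod_cast ha
    rw [Function.comp_apply, sqrt_eq_rpow, ← rpow_natCast, ← rpow_mul ha'.le, ← rpow_add ha']
    norm_num

theorem tendsto_two_pow_div_two_pow_sub_one :
    Tendsto (fun a : ℕ => (2 : ℝ) ^ a / (2 ^ a - 1)) atTop (𝓝 1) := by
  have h : Tendsto (fun a : ℕ => 1 / (1 - (1 / 2 : ℝ) ^ a)) atTop (𝓝 (1 / (1 - 0))) :=
    tendsto_const_nhds.div (tendsto_const_nhds.sub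
      (tendsto_pow_atTop_nhds_zero_of_lt_one (by norm_num) (by norm_num))) (by norm_num)
  rw [sub_zero, div_one] at h
  refine h.congr' ?_
  filter_upwards [eventually_ge_atTop 1] with a ha
  have : (2 : ℝ) ^ a - 1 ≠ 0 := (sub_pos.2 (one_lt_pow₀ one_lt_two (by omega))).ne'
  rw [one_div_pow]
  field_simp

theorem tendsto_sqrt_two_mul_add_one_div_three_div_sqrt :
    Tendsto (fun a : ℕ => √((2 * a + 1) / 3) / √a) atTop (𝓝 √(2 / 3)) := by
  have h : Tendsto (fun a : ℕ => √((2 + (a : ℝ)⁻¹) / 3)) atTop (𝓝 √((2 + 0) / 3)) :=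
    ((tendsto_const_nhds.add tendsto_inv_atTop_nhds_zero_nat).div_const 3).sqrt
  rw [add_zero] at h
  refine h.congr' ?_
  filter_upwards [eventually_ge_atTop 1] with a ha
  have ha' : (0 : ℝ) < a := by exact_mod_cast ha
  rw [← sqrt_div' _ ha'.le]
  congr 1
  field_simp

theorem stmt_14 :
    Tendsto (fun a : ℕ =>
        (1 / (3 * ((2 : ℝ) ^ a - 1))) * Real.sqrt ((2 * a + 1) / 3) *
          ∑ i ∈ Finset.Icc 1 a, (a.choose i : ℝ) *
            (1 / Real.sqrt (2 * ((a : ℝ) - i) + 1) + 2 / Real.sqrt i))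
      atTop (nhds ((4 + Real.sqrt 2) / (3 * Real.sqrt 3))) := by
  have hlimit : (4 + √2) / (3 * √3) = 1 * √(2 / 3) * (1 + 2 * √2) / 3 := by
    have h3 : √(3 : ℝ) ≠ 0 := by positivity
    rw [sqrt_div' _ (by norm_num : (0 : ℝ) ≤ 3)]
    field_simp
    linear_combination (-2 : ℝ) * mul_self_sqrt (zero_le_two : (0 : ℝ) ≤ 2)
  rw [hlimit]
  refine (((tendsto_two_pow_div_two_pow_sub_one.mul
    tendsto_sqrt_two_mul_add_one_div_three_div_sqrt).mul tendsto_sqrt_mul_qotAverage).div_const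
    3).congr' ?_
  filter_upwards [eventually_ge_atTop 1] with a ha
  have hsqrt : √(a : ℝ) ≠ 0 := (sqrt_pos.2 (by exact_mod_cast ha)).ne'
  have hpow : (2 : ℝ) ^ a - 1 ≠ 0 := (sub_pos.2 (one_lt_pow₀ one_lt_two (by omega))).ne'
  simp only [qotAverage, qotWeight]
  field_simp
end

section
/- In a 4-qubit system, any single choice of Pauli basis for each qubit (one of X, Y, Z per qubit) determines exactly 6 = C(4,2) two-qubit Pauli strings measurable from that shot, and since there are 54 = C(4,2)·9 two-qubit Pauli strings in total, at least ⌈54/6⌉ = 9 shots are needed to measure every two-qubit Pauli string at least once; moreover 9 shots suffice. -/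
theorem stmt_17 :
    (∀ f : Fin 4 → Fin 3,
      (Finset.univ.filter fun t : Fin 4 × Fin 4 × Fin 3 × Fin 3 =>
          t.1 < t.2.1 ∧ f t.1 = t.2.2.1 ∧ f t.2.1 = t.2.2.2).card = 6) ∧
    (Finset.univ.filter fun t : Fin 4 × Fin 4 × Fin 3 × Fin 3 =>
        t.1 < t.2.1).card = 54 ∧
    IsLeast {w : ℕ | ∃ shots : Fin w → Fin 4 → Fin 3,
        ∀ (i j : Fin 4) (P Q : Fin 3), i < j →
          ∃ s : Fin w, shots s i = P ∧ shots s j = Q} 9 := by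
  refine ⟨by decide, by decide, ?_, ?_⟩
  · exact ⟨![![0,0,0,1], ![0,1,1,2], ![0,2,2,0], ![1,0,1,0], ![1,1,2,1],
      ![1,2,0,2], ![2,1,0,0], ![2,2,1,1], ![2,0,2,2]], by decide⟩
  · rintro w ⟨shots, h⟩
    choose g hg using fun p : Fin 3 × Fin 3 => h 0 1 p.1 p.2 (by decide)
    have hinj : Function.Injective g := by
      intro p q hpq
      have hp := hg p; rw [hpq] at hp
      exact Prod.ext (hp.1.symm.trans (hg q).1) (hp.2.symm.trans (hg q).2)
    have := Fintype.card_le_of_injective g hinj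
    simpa using this
end

section
/- For the (n, k=2) QOT protocol with n = 2^a qubits, the number of times the observable P_i Q_j is measured in the simple partition equals 2(a − d(i,j)) + 1 if P = Q and equals d(i,j) if P ≠ Q, where d(i,j) is the Hamming distance between the binary representations of i and j; consequently the total number of shots in the partition is 6a + 3. -/
/-- Index type for the QOT shots on `2^a` qubits (labelled by bit strings
`Fin a → Bool`): either a bit position together with an ordered pair of
distinct Pauli bases, or one of the three uniform shots. -/
def QOTIndex (a : ℕ) : Type :=
  (Fin a × {pq : Fin 3 × Fin 3 // pq.1 ≠ pq.2}) ⊕ Fin 3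

instance (a : ℕ) : Fintype (QOTIndex a) := by unfold QOTIndex; infer_instance

instance (a : ℕ) : DecidableEq (QOTIndex a) := by unfold QOTIndex; infer_instance

/-- The QOT shot associated to an index: for `(r, (P, Q))` assign basis `P` to
qubits with `r`-th bit `false` and `Q` to those with `r`-th bit `true`;
the uniform shot assigns the same basis to all qubits. -/
def qotShot (a : ℕ) : QOTIndex a → (Fin a → Bool) → Fin 3
  | .inl (r, pq) => fun q => if q r then pq.1.2 else pq.1.1
  | .inr P => fun _ => P


lemma inner_count (b c : Bool) (P Q : Fin 3) :
    (∑ pq : {pq : Fin 3 × Fin 3 // pq.1 ≠ pq.2},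
      if (if b then pq.1.2 else pq.1.1) = P ∧ (if c then pq.1.2 else pq.1.1) = Q then 1 else 0)
    = if b = c then (if P = Q then 2 else 0) else (if P = Q then 0 else 1) := by
  revert b c P Q; decide

lemma uniform_count (P Q : Fin 3) :
    (∑ x : Fin 3, if x = P ∧ x = Q then 1 else 0) = if P = Q then 1 else 0 := by
  revert P Q; decide

lemma card_pairs : Fintype.card {pq : Fin 3 × Fin 3 // pq.1 ≠ pq.2} = 6 := by decide

theorem stmt_18 (a : ℕ) (ha : 1 ≤ a) (i j : Fin a → Bool) (hij : i ≠ j)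
    (P Q : Fin 3) :
    (Finset.univ.filter fun s : QOTIndex a =>
        qotShot a s i = P ∧ qotShot a s j = Q).card
      = (if P = Q
          then 2 * (a - (Finset.univ.filter fun r => i r ≠ j r).card) + 1
          else (Finset.univ.filter fun r => i r ≠ j r).card) ∧
    Fintype.card (QOTIndex a) = 6 * a + 3 := by
  have hcardsplit :
      (Finset.univ.filter fun r => i r = j r).card
        + (Finset.univ.filter fun r => i r ≠ j r).card = a := by
    have := Finset.card_filter_add_card_filter_not
      (s := (Finset.univ : Finset (Fin a))) (p := fun r => i r = j r)
    simpa [Finset.card_univ] using this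
  constructor
  · rw [Finset.card_filter]
    have hsum : (∑ s : QOTIndex a, if qotShot a s i = P ∧ qotShot a s j = Q then 1 else 0)
        = (∑ s : (Fin a × {pq : Fin 3 × Fin 3 // pq.1 ≠ pq.2}) ⊕ Fin 3,
            if qotShot a s i = P ∧ qotShot a s j = Q then 1 else 0) := rfl
    rw [hsum, Fintype.sum_sum_type]
    have h1 : (∑ x : Fin a × {pq : Fin 3 × Fin 3 // pq.1 ≠ pq.2},
        if qotShot a (Sum.inl x) i = P ∧ qotShot a (Sum.inl x) j = Q then 1 else 0)
        = ∑ r : Fin a, if i r = j r then (if P = Q then 2 else 0) else (if P = Q then 0 else 1) := by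
      rw [Fintype.sum_prod_type]
      refine Finset.sum_congr rfl fun r _ => ?_
      have : ∀ pq : {pq : Fin 3 × Fin 3 // pq.1 ≠ pq.2},
          qotShot a (Sum.inl (r, pq)) i = (if i r then pq.1.2 else pq.1.1) := fun pq => rfl
      simp only [qotShot]
      exact inner_count (i r) (j r) P Q
    have h2 : (∑ x : Fin 3,
        if qotShot a (Sum.inr x) i = P ∧ qotShot a (Sum.inr x) j = Q then 1 else 0)
        = if P = Q then 1 else 0 := by
      simp only [qotShot]
      exact uniform_count P Q
    rw [h1, h2]
    by_cases hPQ : P = Q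
    · simp only [hPQ, if_true, if_pos rfl]
      have : (∑ r : Fin a, if i r = j r then 2 else 0)
          = 2 * (Finset.univ.filter fun r => i r = j r).card := by
        rw [← Finset.sum_filter, Finset.sum_const, smul_eq_mul, mul_comm]
      rw [this]
      omega
    · simp only [if_neg hPQ]
      rw [show (∑ r : Fin a, if i r = j r then 0 else 1)
          = ∑ r : Fin a, if i r ≠ j r then 1 else 0 by
        refine Finset.sum_congr rfl fun r _ => ?_
        by_cases h : i r = j r <;> simp [h]]
      rw [← Finset.card_filter]
      omega
  · have : Fintype.card (QOTIndex a)
        = Fintype.card ((Fin a × {pq : Fin 3 × Fin 3 // pq.1 ≠ pq.2}) ⊕ Fin 3) := rfl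
    rw [this, Fintype.card_sum, Fintype.card_prod, card_pairs, Fintype.card_fin, Fintype.card_fin]
    ring
end
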